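/- arXiv:2111.06877 — 3 statements merged into one kernel-verified Lean document; each statement's English description precedes it below -/
import Mathlib

section
/- Suppose every trajectory of a vector field X starting in the closed unit ball B₁(ℓ°) reaches a fixed point set S by time T, and X satisfies the scaling property X(ℓ° + αp) = X(ℓ° + p) for α > 0, where S is invariant under the maps p ↦ ℓ° + α(p − ℓ°). Then every trajectory starting in B_δ(ℓ°) reaches S by time T·δ. -/
open MeasureTheory Set

/-- If every trajectory of a conic vector field `X` starting in the closed unit
ball around `ℓ₀` reaches the (scaling-invariant) set `S` by time `T`, then every
trajectory starting in the closed ball of radius `δ` reaches `S` by time `T * δ`. -/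
theorem stmt1 {V : Type*} [Fintype V]
    (X : (V → ℝ) → (V → ℝ)) (ℓ₀ : V → ℝ) (S : Set (V → ℝ)) (T : ℝ) (hT : 0 ≤ T)
    (hconic : ∀ (α : ℝ), 0 < α → ∀ p : V → ℝ, X (ℓ₀ + α • p) = X (ℓ₀ + p))
    (hSinv : ∀ x ∈ S, ∀ (α : ℝ), 0 < α → ℓ₀ + α • (x - ℓ₀) ∈ S)
    (hreach : ∀ ℓ : ℝ → (V → ℝ), LocallyLipschitz ℓ →
      (∀ᵐ θ ∂(volume.restrict (Ici (0:ℝ))), HasDerivAt ℓ (X (ℓ θ)) θ) →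
      ℓ 0 ∈ Metric.closedBall ℓ₀ 1 → ∀ θ ≥ T, ℓ θ ∈ S) :
    ∀ δ > (0:ℝ), ∀ ℓ : ℝ → (V → ℝ), LocallyLipschitz ℓ →
      (∀ᵐ θ ∂(volume.restrict (Ici (0:ℝ))), HasDerivAt ℓ (X (ℓ θ)) θ) →
      ℓ 0 ∈ Metric.closedBall ℓ₀ δ → ∀ θ ≥ T * δ, ℓ θ ∈ S := by
  intro δ hδ ℓ hlip hderiv h0 θ hθ
  have hδne : δ ≠ 0 := ne_of_gt hδ
  have hδinv : (0:ℝ) < δ⁻¹ := inv_pos.mpr hδ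
  set m : ℝ → (V → ℝ) := fun t => ℓ₀ + δ⁻¹ • (ℓ (δ * t) - ℓ₀) with hm
  -- X (m t) = X (ℓ (δ * t))
  have hXm : ∀ t, X (m t) = X (ℓ (δ * t)) := by
    intro t
    have := hconic δ⁻¹ hδinv (ℓ (δ * t) - ℓ₀)
    simpa using this
  -- m is locally Lipschitz
  have hmlip : LocallyLipschitz m := by
    have h1 : LipschitzWith (Real.nnabs δ) (fun t : ℝ => δ * t) := by
      refine LipschitzWith.of_dist_le_mul fun x y => ?_
      simp [Real.dist_eq, ← mul_sub, abs_mul, Real.coe_nnabs]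
    have h2 : LipschitzWith (Real.nnabs δ⁻¹) (fun v : V → ℝ => ℓ₀ + δ⁻¹ • (v - ℓ₀)) := by
      refine LipschitzWith.of_dist_le_mul fun x y => ?_
      have : (ℓ₀ + δ⁻¹ • (x - ℓ₀)) - (ℓ₀ + δ⁻¹ • (y - ℓ₀)) = δ⁻¹ • (x - y) := by
        module
      simp [dist_eq_norm, this, norm_smul, Real.coe_nnabs]
    exact (h2.locallyLipschitz.comp hlip).comp h1.locallyLipschitz
  -- m satisfies the ODE a.e. on Ici 0
  have hmderiv : ∀ᵐ t ∂(volume.restrict (Ici (0:ℝ))), HasDerivAt m (X (m t)) t := by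
    rw [ae_iff, Measure.restrict_apply' measurableSet_Ici]
    rw [ae_iff, Measure.restrict_apply' measurableSet_Ici] at hderiv
    refine measure_mono_null (fun t ht => ?_)
      (show volume ((δ • ·) ⁻¹' ({s | ¬HasDerivAt ℓ (X (ℓ s)) s} ∩ Ici 0)) = 0 from ?_)
    · obtain ⟨hbad, ht0⟩ := ht
      refine ⟨fun hd => hbad ?_, by simpa using mul_nonneg hδ.le ht0⟩
      -- from HasDerivAt ℓ (X (ℓ (δ • t))) (δ • t) deduce the derivative of m at t
      have hd' : HasDerivAt ℓ (X (ℓ (δ * t))) (δ * t) := by simpa [smul_eq_mul] using hd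
      have hinner : HasDerivAt (fun s : ℝ => δ * s) δ t := by
        simpa using (hasDerivAt_id t).const_mul δ
      have hcomp : HasDerivAt (fun s => ℓ (δ * s)) (δ • X (ℓ (δ * t))) t :=
        HasDerivAt.scomp t hd' hinner
      have hsub : HasDerivAt (fun s => ℓ (δ * s) - ℓ₀) (δ • X (ℓ (δ * t))) t :=
        hcomp.sub_const ℓ₀
      have hsmul : HasDerivAt (fun s => δ⁻¹ • (ℓ (δ * s) - ℓ₀))
          (δ⁻¹ • δ • X (ℓ (δ * t))) t := hsub.const_smul δ⁻¹
      have : HasDerivAt m (δ⁻¹ • δ • X (ℓ (δ * t))) t := hsmul.const_add ℓ₀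
      have heq : δ⁻¹ • δ • X (ℓ (δ * t)) = X (m t) := by
        rw [hXm, smul_smul, inv_mul_cancel₀ hδne, one_smul]
      rwa [heq] at this
    · rw [Measure.addHaar_preimage_smul volume hδne, hderiv, mul_zero]
  -- m starts in the unit ball
  have hm0 : m 0 ∈ Metric.closedBall ℓ₀ 1 := by
    rw [Metric.mem_closedBall] at h0 ⊢
    have : dist (m 0) ℓ₀ = δ⁻¹ * dist (ℓ 0) ℓ₀ := by
      simp [hm, dist_eq_norm, norm_smul, abs_of_pos hδinv, hδ.le]
    rw [this]
    calc δ⁻¹ * dist (ℓ 0) ℓ₀ ≤ δ⁻¹ * δ := by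
          exact mul_le_mul_of_nonneg_left h0 hδinv.le
      _ = 1 := inv_mul_cancel₀ hδne
  -- apply hreach to m at time θ / δ
  have hθδ : θ / δ ≥ T := (le_div_iff₀ hδ).mpr hθ
  have hmem : m (θ / δ) ∈ S := hreach m hmlip hmderiv hm0 (θ / δ) hθδ
  have hkey := hSinv _ hmem δ hδ
  have : ℓ₀ + δ • (m (θ / δ) - ℓ₀) = ℓ θ := by
    have hx : δ * (θ / δ) = θ := by field_simp
    simp only [hm, hx]
    have : (ℓ₀ + δ⁻¹ • (ℓ θ - ℓ₀)) - ℓ₀ = δ⁻¹ • (ℓ θ - ℓ₀) := by abel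
    rw [this, smul_smul, mul_inv_cancel₀ hδne, one_smul]
    abel
  rwa [this] at hkey
end

section
/- Let ℓ_v, ℓ_w : [0,θ] → ℝ be nondecreasing Lipschitz functions, λ'_v, λ'_w > 0 with λ'_v ≤ λ'_w, and let A := {ξ ∈ [0,θ] : ℓ_w(ξ) − ℓ_v(ξ) ≥ τ} for τ ≥ 0. If (a,b) ⊆ [0,θ] ∖ A is a connected component with a > 0, then ∫_a^b (ℓ'_w(ξ)/λ'_w − ℓ'_v(ξ)/λ'_v) dξ ≤ 0. -/
open Set

open MeasureTheory

lemma mono_deriv_nonneg {f : ℝ → ℝ} (hf : Monotone f) (x : ℝ) : 0 ≤ deriv f x := by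
  by_cases h : DifferentiableAt ℝ f x
  · have hd := h.hasDerivAt
    rw [hasDerivAt_iff_tendsto_slope] at hd
    refine ge_of_tendsto hd ?_
    filter_upwards [self_mem_nhdsWithin] with y hy
    rcases lt_or_gt_of_ne (Ne.symm hy) with h' | h'
    · rw [slope_def_field]
      exact div_nonneg (sub_nonneg.2 (hf h'.le)) (sub_nonneg.2 h'.le)
    · rw [slope_def_field, div_nonneg_iff]
      exact Or.inr ⟨sub_nonpos.2 (hf h'.le), sub_nonpos.2 h'.le⟩
  · rw [deriv_zero_of_not_differentiableAt h]

lemma lip_intervalIntegrable {f : ℝ → ℝ} {K : NNReal} (hl : LipschitzWith K f)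
    (a b : ℝ) : IntervalIntegrable (deriv f) volume a b := by
  rw [intervalIntegrable_iff]
  apply Measure.integrableOn_of_bounded (M := (K : ℝ)) measure_Ioc_lt_top.ne
  · exact (measurable_deriv f).aestronglyMeasurable
  · exact Filter.Eventually.of_forall fun x => norm_deriv_le_of_lipschitz (𝕜 := ℝ) hl

lemma ftc_lip_mono {f : ℝ → ℝ} {K : NNReal} (hm : Monotone f) (hl : LipschitzWith K f)
    {a b : ℝ} (hab : a ≤ b) : ∫ x in a..b, deriv f x = f b - f a := by
  have hcont : Continuous f := hl.continuous
  have hst : ∀ x, hm.stieltjesFunction x = f x := by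
    intro x
    rw [hm.stieltjesFunction_eq]
    exact rightLim_eq_of_tendsto (h := nhdsGT_neBot x) (hcont.continuousAt.continuousWithinAt.tendsto)
  set μ := hm.stieltjesFunction.measure with hμ
  have hμIoc : ∀ c d : ℝ, μ (Ioc c d) = ENNReal.ofReal (f d - f c) := by
    intro c d
    rw [hμ, StieltjesFunction.measure_Ioc, hst, hst]
  -- complementary monotone function
  set g : ℝ → ℝ := fun x => (K : ℝ) * x - f x with hg
  have hgm : Monotone g := by
    intro x y hxy
    have h1 : f y - f x ≤ (K : ℝ) * (y - x) := by
      have h0 := hl.dist_le_mul x y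
      rw [Real.dist_eq, Real.dist_eq, abs_sub_comm x y, abs_of_nonneg (sub_nonneg.2 hxy),
        abs_sub_comm (f x) (f y)] at h0
      exact (le_abs_self _).trans h0
    simp only [hg]
    nlinarith
  have hgcont : Continuous g := (continuous_const.mul continuous_id).sub hcont
  set ν := hgm.stieltjesFunction.measure with hν
  have hνIoc : ∀ c d : ℝ, ν (Ioc c d) = ENNReal.ofReal (g d - g c) := by
    intro c d
    rw [hν, StieltjesFunction.measure_Ioc, hgm.stieltjesFunction_eq, hgm.stieltjesFunction_eq,
      rightLim_eq_of_tendsto (h := nhdsGT_neBot c) (hgcont.continuousAt.continuousWithinAt.tendsto),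
      rightLim_eq_of_tendsto (h := nhdsGT_neBot d) (hgcont.continuousAt.continuousWithinAt.tendsto)]
  haveI : IsLocallyFiniteMeasure (μ + ν) := by
    refine ⟨fun x => ?_⟩
    obtain ⟨s, hs, h1⟩ := μ.finiteAt_nhds x
    obtain ⟨t, ht, h2⟩ := ν.finiteAt_nhds x
    refine ⟨s ∩ t, Filter.inter_mem hs ht, ?_⟩
    rw [Measure.add_apply]
    exact lt_of_le_of_lt
      (add_le_add (measure_mono inter_subset_left) (measure_mono inter_subset_right))
      (ENNReal.add_lt_top.2 ⟨h1, h2⟩)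
  have key : μ + ν = (K : ENNReal) • volume := by
    refine Measure.ext_of_Ioc _ _ (fun c d hcd => ?_)
    rw [Measure.add_apply, hμIoc, hνIoc, Measure.smul_apply, Real.volume_Ioc, smul_eq_mul,
      ← ENNReal.ofReal_coe_nnreal, ← ENNReal.ofReal_mul K.coe_nonneg,
      ← ENNReal.ofReal_add (sub_nonneg.2 (hm hcd.le)) (sub_nonneg.2 (hgm hcd.le))]
    congr 1
    simp only [hg]
    ring
  have hle : μ ≤ (K : ENNReal) • volume := by
    refine Measure.le_intro fun s hs _ => ?_
    rw [← key, Measure.add_apply]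
    exact le_add_right le_rfl
  have hac : μ ≪ volume := Measure.absolutelyContinuous_of_le_smul hle
  have hderiv : ∀ᵐ x, deriv f x = (μ.rnDeriv volume x).toReal := by
    filter_upwards [hm.ae_hasDerivAt] with x hx
    exact hx.deriv
  have hlint : ∫⁻ x in Ioc a b, μ.rnDeriv volume x = μ (Ioc a b) :=
    Measure.setLIntegral_rnDeriv hac _
  have hint : ∫ x in Ioc a b, deriv f x = (μ (Ioc a b)).toReal := by
    rw [setIntegral_congr_ae measurableSet_Ioc
      (hderiv.mono fun x hx _ => hx), ← hlint]
    rw [integral_toReal]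
    · exact (Measure.measurable_rnDeriv μ volume).aemeasurable.restrict
    · exact ae_restrict_of_ae (Measure.rnDeriv_lt_top μ volume)
  rw [intervalIntegral.integral_of_le hab, hint, hμIoc,
    ENNReal.toReal_ofReal (sub_nonneg.2 (hm hab))]

/-- On a connected component `(a,b)` (with `a > 0`) of the complement of
`A = {ξ : ℓ_w(ξ) - ℓ_v(ξ) ≥ τ}`, the integral of
`ℓ'_w/λ'_w - ℓ'_v/λ'_v` is nonpositive (case `λ'_v ≤ λ'_w`). -/
theorem stmt7 (θ τ lamv lamw a b : ℝ) (ℓv ℓw : ℝ → ℝ) (K : NNReal)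
    (hmv : Monotone ℓv) (hmw : Monotone ℓw)
    (hlv : LipschitzWith K ℓv) (hlw : LipschitzWith K ℓw)
    (hlamv : 0 < lamv) (hlam : lamv ≤ lamw) (hτ : 0 ≤ τ)
    (ha : 0 < a) (hab : a < b) (hbθ : b ≤ θ)
    (haA : τ ≤ ℓw a - ℓv a)
    (hcomp : ∀ ξ ∈ Ioo a b, ℓw ξ - ℓv ξ < τ) :
    ∫ ξ in a..b, (deriv ℓw ξ / lamw - deriv ℓv ξ / lamv) ≤ 0 := by
  have hlamw : 0 < lamw := hlamv.trans_le hlam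
  have hbA : ℓw b - ℓv b ≤ τ := by
    have hcw : Continuous (fun ξ => ℓw ξ - ℓv ξ) := hlw.continuous.sub hlv.continuous
    have ht : Filter.Tendsto (fun ξ => ℓw ξ - ℓv ξ) (nhdsWithin b (Iio b))
        (nhds (ℓw b - ℓv b)) := hcw.continuousAt.continuousWithinAt.tendsto
    refine le_of_tendsto ht ?_
    filter_upwards [Ioo_mem_nhdsLT_of_mem (⟨hab, le_rfl⟩ : b ∈ Ioc a b)] with ξ hξ
    exact (hcomp ξ hξ).le
  have intv := lip_intervalIntegrable hlv a b
  have intw := lip_intervalIntegrable hlw a b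
  have int1 : IntervalIntegrable (fun ξ => deriv ℓw ξ / lamw - deriv ℓv ξ / lamv)
      MeasureTheory.volume a b := (intw.div_const _).sub (intv.div_const _)
  have int2 : IntervalIntegrable (fun ξ => (deriv ℓw ξ - deriv ℓv ξ) / lamw)
      MeasureTheory.volume a b := (intw.sub intv).div_const _
  have mono : ∀ ξ ∈ Icc a b,
      deriv ℓw ξ / lamw - deriv ℓv ξ / lamv ≤ (deriv ℓw ξ - deriv ℓv ξ) / lamw := by
    intro ξ _
    have h0 := mono_deriv_nonneg hmv ξ
    have h1 : deriv ℓv ξ / lamw ≤ deriv ℓv ξ / lamv :=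
      div_le_div_of_nonneg_left h0 hlamv hlam
    rw [sub_div]
    linarith
  have step1 := intervalIntegral.integral_mono_on hab.le int1 int2 mono
  have hW := ftc_lip_mono hmw hlw hab.le
  have hV := ftc_lip_mono hmv hlv hab.le
  have step2 : (∫ ξ in a..b, (deriv ℓw ξ - deriv ℓv ξ) / lamw)
      = ((ℓw b - ℓw a) - (ℓv b - ℓv a)) / lamw := by
    rw [intervalIntegral.integral_div, intervalIntegral.integral_sub intw intv, hW, hV]
  refine step1.trans ?_
  rw [step2]
  exact div_nonpos_of_nonpos_of_nonneg (by linarith) hlamw.le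
end

section
/- Suppose ℓ_v, ℓ_w : [0,θ] → ℝ are Lipschitz with ℓ_w(b) − ℓ_v(b) ≤ τ and ∫_{[0,θ]∖A} (ℓ'_w/λ'_w − ℓ'_v/λ'_v) dξ ≤ −𝟙_{0∈[0,θ]∖A}·(ℓ_w(0)/λ'_w − ℓ_v(0)/λ'_v − τ/λ'_w) where A := {ξ : ℓ_w(ξ) − ℓ_v(ξ) ≥ τ}, λ'_w ≥ λ'_v > 0, and ℓ_v, ℓ_w nondecreasing. Then p := ∫_A (ℓ'_w/λ'_w − ℓ'_v/λ'_v) dξ + 𝟙_{0∈A}·(ℓ_w(0)/λ'_w − ℓ_v(0)/λ'_v − τ/λ'_w) satisfies p ≥ ℓ_w(θ)/λ'_w − ℓ_v(θ)/λ'_v − τ/λ'_w. -/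
open Set MeasureTheory
open scoped Classical ENNReal
open Function

lemma lip_mono_ftc {K : NNReal} {ℓ : ℝ → ℝ} (hl : LipschitzWith K ℓ) (hm : Monotone ℓ)
    {a b : ℝ} (hab : a ≤ b) :
    IntegrableOn (deriv ℓ) (Icc a b) ∧ ∫ x in Icc a b, deriv ℓ x = ℓ b - ℓ a := by
  classical
  have hcont : Continuous ℓ := hl.continuous
  set S := hm.stieltjesFunction with hSdef
  have hS : ∀ x, S x = ℓ x := by
    intro x
    rw [hm.stieltjesFunction_eq]
    exact rightLim_eq_of_tendsto (h := nhdsGT_neBot x) (hcont.continuousAt.tendsto.mono_left nhdsWithin_le_nhds)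
  -- h := K x - ℓ x is monotone
  have hmh : Monotone (fun x : ℝ => (K : ℝ) * x - ℓ x) := by
    intro x y hxy
    have := hl.dist_le_mul x y
    rw [Real.dist_eq, Real.dist_eq] at this
    have h1 : ℓ y - ℓ x ≤ K * |x - y| := by
      rw [abs_sub_comm] at this
      exact (le_abs_self _).trans this
    rw [abs_of_nonpos (by linarith)] at h1
    simp only at h1 ⊢
    nlinarith
  set T := hmh.stieltjesFunction with hTdef
  have hconth : Continuous (fun x : ℝ => (K : ℝ) * x - ℓ x) :=
    (continuous_const.mul continuous_id).sub hcont
  have hT : ∀ x, T x = (K : ℝ) * x - ℓ x := by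
    intro x
    rw [hmh.stieltjesFunction_eq]
    exact rightLim_eq_of_tendsto (h := nhdsGT_neBot x)
      (hconth.continuousAt.tendsto.mono_left nhdsWithin_le_nhds)
  have hsum : S + T = K • StieltjesFunction.id := by
    ext x
    simp only [StieltjesFunction.add_apply, hS, hT]
    show ℓ x + ((K:ℝ) * x - ℓ x) = (K • StieltjesFunction.id) x
    have : (K • StieltjesFunction.id) x = (K : ℝ) • (StieltjesFunction.id x) := rfl
    rw [this]
    show ℓ x + ((K:ℝ) * x - ℓ x) = (K:ℝ) * x
    ring
  have hmeas : S.measure + T.measure = (K : ℝ≥0∞) • volume := by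
    rw [← StieltjesFunction.measure_add, hsum, StieltjesFunction.measure_smul,
      ← Real.volume_eq_stieltjes_id]
    rfl
  have hle : S.measure ≤ (K : ℝ≥0∞) • volume := by
    rw [← hmeas]; exact Measure.le_add_right le_rfl
  have hac : S.measure ≪ volume := Measure.absolutelyContinuous_of_le_smul hle
  have hfin : S.measure (Icc a b) < ∞ := by
    refine lt_of_le_of_lt (hle _) ?_
    simp [Real.volume_Icc]
    exact ENNReal.mul_lt_top (by simp) (by simp)
  -- a.e. derivative
  have hderiv : ∀ᵐ x, deriv ℓ x = (S.measure.rnDeriv volume x).toReal := by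
    filter_upwards [hm.ae_hasDerivAt] with x hx
    exact hx.deriv
  have hmeasg : Measurable fun x => (S.measure.rnDeriv volume x).toReal :=
    (Measure.measurable_rnDeriv _ _).ennreal_toReal
  have hint : IntegrableOn (fun x => (S.measure.rnDeriv volume x).toReal) (Icc a b) := by
    refine ⟨hmeasg.aestronglyMeasurable, ?_⟩
    rw [hasFiniteIntegral_iff_norm]
    calc ∫⁻ x, ENNReal.ofReal ‖(S.measure.rnDeriv volume x).toReal‖
          ∂(volume.restrict (Icc a b))
        ≤ ∫⁻ x, S.measure.rnDeriv volume x ∂(volume.restrict (Icc a b)) := by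
          refine lintegral_mono fun x => ?_
          rw [Real.norm_eq_abs, abs_of_nonneg ENNReal.toReal_nonneg]
          exact ENNReal.ofReal_toReal_le
      _ ≤ S.measure (Icc a b) := Measure.setLIntegral_rnDeriv_le _
      _ < ∞ := hfin
  have hae : (fun x => deriv ℓ x) =ᵐ[volume.restrict (Icc a b)]
      fun x => (S.measure.rnDeriv volume x).toReal := ae_restrict_of_ae hderiv
  constructor
  · exact hint.congr hae.symm
  · rw [integral_congr_ae hae, Measure.setIntegral_toReal_rnDeriv hac]
    have hIcc : S.measure (Icc a b) = ENNReal.ofReal (ℓ b - ℓ a) := by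
      rw [StieltjesFunction.measure_Icc]
      congr 1
      · rw [hS]
        congr 1
        have : leftLim (⇑S) a = leftLim ℓ a := by
          congr 1
          exact funext hS
        rw [this]
        exact leftLim_eq_of_tendsto (h := nhdsLT_neBot a)
          (hcont.continuousAt.tendsto.mono_left nhdsWithin_le_nhds)
    rw [measureReal_def, hIcc, ENNReal.toReal_ofReal (by linarith [hm hab])]

/-- Dual-feasibility estimate for edges in `E^>`: with
`A = {ξ ∈ [0,θ] : ℓ_w(ξ) - ℓ_v(ξ) ≥ τ}`, if the integral over the complement of
`A` is bounded as in the hypothesis, then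
`p := ∫_A (ℓ'_w/λ'_w - ℓ'_v/λ'_v) + 𝟙_{0∈A}(ℓ_w(0)/λ'_w - ℓ_v(0)/λ'_v - τ/λ'_w)`
satisfies `p ≥ ℓ_w(θ)/λ'_w - ℓ_v(θ)/λ'_v - τ/λ'_w`. -/
theorem stmt17 (θ τ lamv lamw : ℝ) (hθ : 0 ≤ θ) (hτ : 0 ≤ τ)
    (hlamv : 0 < lamv) (hlam : lamv ≤ lamw)
    (ℓv ℓw : ℝ → ℝ) (K : NNReal)
    (hlv : LipschitzWith K ℓv) (hlw : LipschitzWith K ℓw)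
    (hmv : Monotone ℓv) (hmw : Monotone ℓw)
    (hcomp :
      ∫ ξ in (Icc 0 θ \ {ξ ∈ Icc 0 θ | τ ≤ ℓw ξ - ℓv ξ}),
          (deriv ℓw ξ / lamw - deriv ℓv ξ / lamv) ≤
        (if (0:ℝ) ∈ Icc 0 θ \ {ξ ∈ Icc 0 θ | τ ≤ ℓw ξ - ℓv ξ}
          then -(ℓw 0 / lamw - ℓv 0 / lamv - τ / lamw) else 0)) :
    ℓw θ / lamw - ℓv θ / lamv - τ / lamw ≤
      (∫ ξ in {ξ ∈ Icc 0 θ | τ ≤ ℓw ξ - ℓv ξ},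
          (deriv ℓw ξ / lamw - deriv ℓv ξ / lamv)) +
      (if (0:ℝ) ∈ {ξ ∈ Icc 0 θ | τ ≤ ℓw ξ - ℓv ξ}
        then (ℓw 0 / lamw - ℓv 0 / lamv - τ / lamw) else 0) := by
  classical
  have hlamw : 0 < lamw := lt_of_lt_of_le hlamv hlam
  set A := {ξ ∈ Icc (0:ℝ) θ | τ ≤ ℓw ξ - ℓv ξ} with hAdef
  have hAeq : A = Icc 0 θ ∩ {ξ | τ ≤ ℓw ξ - ℓv ξ} := rfl
  have hA : MeasurableSet A := by
    rw [hAeq]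
    exact measurableSet_Icc.inter
      (measurableSet_le measurable_const (hlw.continuous.sub hlv.continuous).measurable)
  have hsub : A ⊆ Icc 0 θ := fun x hx => hx.1
  obtain ⟨hintw, hftcw⟩ := lip_mono_ftc hlw hmw hθ
  obtain ⟨hintv, hftcv⟩ := lip_mono_ftc hlv hmv hθ
  set f := fun ξ => deriv ℓw ξ / lamw - deriv ℓv ξ / lamv with hfdef
  have hintf : IntegrableOn f (Icc 0 θ) :=
    (hintw.div_const lamw).sub (hintv.div_const lamv)
  have htotal : ∫ ξ in Icc 0 θ, f ξ =
      (ℓw θ - ℓw 0) / lamw - (ℓv θ - ℓv 0) / lamv := by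
    rw [hfdef]
    rw [integral_sub (hintw.div_const _) (hintv.div_const _), integral_div, integral_div,
      hftcw, hftcv]
  have hsplit : (∫ ξ in A, f ξ) + (∫ ξ in Icc 0 θ \ A, f ξ) = ∫ ξ in Icc 0 θ, f ξ := by
    have h := integral_inter_add_diff (μ := volume) (s := Icc 0 θ) (t := A) hA hintf
    rwa [Set.inter_eq_self_of_subset_right hsub] at h
  rw [sub_div, sub_div] at htotal
  by_cases h0 : (0:ℝ) ∈ A
  · rw [if_pos h0]
    rw [if_neg (fun h => h.2 h0)] at hcomp
    linarith
  · rw [if_neg h0]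
    rw [if_pos ⟨⟨le_rfl, hθ⟩, h0⟩] at hcomp
    linarith
end
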